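/- arXiv:2206.08774 — 4 statements merged into one kernel-verified Lean document; each statement's English description precedes it below -/
import Mathlib

section
/- Let A, B : S → ℝ₊₊ be functions on a set S and R : ℝ → ℝ be nondecreasing. Then sup_{p ∈ S} R(A(p)/B(p)) = sup_{p ∈ S} sup_{z ∈ ℝ} R(2z√(A(p)) − z²B(p)), and for each fixed p the inner supremum over z is attained at z = √(A(p))/B(p). -/
/-! Completing the square, `2 z √a - z² b = a / b - b (z - √a / b)²`, so for `b > 0` the quadratic
transform `z ↦ 2 z √a - z² b` has maximum `a / b`, attained at `z = √a / b`. A monotone `R` keeps this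
maximiser, so for each `p` the inner supremum is `R (A p / B p)`. -/

open Set

noncomputable section

def quadraticTransform (a b z : ℝ) : ℝ := 2 * z * √a - z ^ 2 * b

variable {a b : ℝ}

theorem quadraticTransform_le_div (ha : 0 ≤ a) (hb : 0 < b) (z : ℝ) :
    quadraticTransform a b z ≤ a / b := by
  have hsq : √a ^ 2 = a := Real.sq_sqrt ha
  rw [quadraticTransform, le_div_iff₀ hb]
  nlinarith [sq_nonneg (z * b - √a)]

theorem quadraticTransform_sqrt_div (ha : 0 ≤ a) (hb : b ≠ 0) :
    quadraticTransform a b (√a / b) = a / b := by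
  have hsq : √a ^ 2 = a := Real.sq_sqrt ha
  rw [quadraticTransform]
  field_simp
  linear_combination hsq

theorem Monotone.isGreatest_range_comp_quadraticTransform {R : ℝ → ℝ} (hR : Monotone R)
    (ha : 0 ≤ a) (hb : 0 < b) :
    IsGreatest (range fun z ↦ R (quadraticTransform a b z)) (R (a / b)) :=
  ⟨⟨√a / b, congrArg R (quadraticTransform_sqrt_div ha hb.ne')⟩,
    forall_mem_range.2 fun z ↦ hR (quadraticTransform_le_div ha hb z)⟩

end

/-- Quadratic transform for a single-ratio problem: the sup of `R(A/B)` equals the joint sup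
over `p` and the auxiliary variable `z`, and the inner sup is attained at `z = √(A p)/B p`. -/
theorem stmt_3 {S : Type*} (A B : S → ℝ) (R : ℝ → ℝ)
    (hA : ∀ p, 0 < A p) (hB : ∀ p, 0 < B p) (hR : Monotone R) :
    (⨆ p, R (A p / B p)) =
      (⨆ p, ⨆ z : ℝ, R (2 * z * Real.sqrt (A p) - z ^ 2 * B p)) ∧
    ∀ p : S,
      (∀ z : ℝ, R (2 * z * Real.sqrt (A p) - z ^ 2 * B p) ≤
        R (2 * (Real.sqrt (A p) / B p) * Real.sqrt (A p)
            - (Real.sqrt (A p) / B p) ^ 2 * B p)) ∧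
      (⨆ z : ℝ, R (2 * z * Real.sqrt (A p) - z ^ 2 * B p)) =
        R (2 * (Real.sqrt (A p) / B p) * Real.sqrt (A p)
            - (Real.sqrt (A p) / B p) ^ 2 * B p) := by
  have hgreatest (p : S) := hR.isGreatest_range_comp_quadraticTransform (hA p).le (hB p)
  have hopt (p : S) : quadraticTransform (A p) (B p) (√(A p) / B p) = A p / B p :=
    quadraticTransform_sqrt_div (hA p).le (hB p).ne'
  refine ⟨iSup_congr fun p ↦ (hgreatest p).csSup_eq.symm, fun p ↦ ⟨?_, ?_⟩⟩
  · intro z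
    change R (quadraticTransform _ _ z) ≤ R (quadraticTransform _ _ _)
    rw [hopt]
    exact (hgreatest p).2 (mem_range_self z)
  · change (⨆ z, R (quadraticTransform _ _ z)) = R (quadraticTransform _ _ _)
    rw [hopt]
    exact (hgreatest p).csSup_eq
end

section
/- Let R₁,…,R_K : ℝ → ℝ be nondecreasing functions and A_k, B_k : S → ℝ₊₊. Then sup_{p ∈ S} Σ_k R_k(A_k(p)/B_k(p)) = sup_{p ∈ S} sup_{z ∈ ℝ^K} Σ_k R_k(2 z_k √(A_k(p)) − z_k² B_k(p)). -/
/-!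
Completing the square, `A / B - (2 z √A - z² B) = (√A - z B)² / B ≥ 0`, shows that for fixed `p`
the inner supremum over each `z k` is attained at `z k = √(A k p) / B k p` with value `A k p / B k p`.
Monotonicity of the `R k` lets the maximisation pass through each summand, so the two objectives
agree pointwise in `p`.
-/

open Real

lemma two_mul_mul_sqrt_sub_sq_mul_le_div {a b : ℝ} (ha : 0 ≤ a) (hb : 0 < b) (z : ℝ) :
    2 * z * √a - z ^ 2 * b ≤ a / b := by
  rw [le_div_iff₀ hb]
  nlinarith [sq_nonneg (√a - z * b), sq_sqrt ha]

lemma two_mul_mul_sqrt_sub_sq_mul_eq_div {a b : ℝ} (ha : 0 ≤ a) (hb : 0 < b) :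
    2 * (√a / b) * √a - (√a / b) ^ 2 * b = a / b := by
  field_simp
  linear_combination sq_sqrt ha

theorem iSup_sum_monotone_quadratic_transform {ι : Type*} [Fintype ι] {R : ι → ℝ → ℝ}
    (hR : ∀ k, Monotone (R k)) {a b : ι → ℝ} (ha : ∀ k, 0 ≤ a k) (hb : ∀ k, 0 < b k) :
    ⨆ z : ι → ℝ, ∑ k, R k (2 * z k * √(a k) - z k ^ 2 * b k) = ∑ k, R k (a k / b k) := by
  have hle (z : ι → ℝ) : ∑ k, R k (2 * z k * √(a k) - z k ^ 2 * b k) ≤ ∑ k, R k (a k / b k) :=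
    Finset.sum_le_sum fun k _ => hR k (two_mul_mul_sqrt_sub_sq_mul_le_div (ha k) (hb k) (z k))
  have hattained : ∑ k, R k (2 * (√(a k) / b k) * √(a k) - (√(a k) / b k) ^ 2 * b k) =
      ∑ k, R k (a k / b k) := by
    simp only [two_mul_mul_sqrt_sub_sq_mul_eq_div (ha _) (hb _)]
  refine le_antisymm (ciSup_le hle) ?_
  exact le_ciSup_of_le ⟨_, Set.forall_mem_range.2 hle⟩ (fun k => √(a k) / b k) hattained.ge

/-- Sum-of-functions-of-ratios quadratic transform. -/
theorem stmt_4 {S : Type*} (K : ℕ) (R : Fin K → ℝ → ℝ) (A B : Fin K → S → ℝ)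
    (hR : ∀ k, Monotone (R k)) (hA : ∀ k p, 0 < A k p) (hB : ∀ k p, 0 < B k p) :
    (⨆ p, ∑ k, R k (A k p / B k p)) =
      ⨆ p, ⨆ z : Fin K → ℝ,
        ∑ k, R k (2 * z k * Real.sqrt (A k p) - (z k) ^ 2 * B k p) := by
  congr 1
  funext p
  exact (iSup_sum_monotone_quadratic_transform hR (fun k => (hA k p).le) (fun k => hB k p)).symm
end

section
/- Let M̄, D, U be positive integers with M̄ ≥ D·U, and let ϑ = ⌊M̄/D⌋. For d = 1,…,D define the pilot sequence x_d ∈ ℂ^{M̄} by (x_d)_k = exp(j2π(k−1)(d−1)ϑ/M̄) for k = 1,…,M̄, and set J_d = X_d Φ F Ψ, where X_d = diag(x_d), Φ selects the M̄ evenly spaced uplink subcarrier rows out of M_sum total subcarriers, F is the M_sum-point unitary DFT matrix, and Ψ consists of the first U columns of I_{M_sum}. Then J_dᴴ J_d = (M̄/M_sum) I_U for every d, and J_dᴴ J_k = 0 for all d ≠ k. -/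
/-!
Row `k` of `J_d` is `k ↦ exp(2πi k (dϑ - u) / M̄) / √M_sum`: the subsampling by `s` turns the
`M_sum`-point DFT into an `M̄`-point one, and the pilot `x_d` shifts the delay `u` by `dϑ`.
Hence the `(u, v)` entry of `J_dᴴ J_e` is a geometric sum of `M̄`-th roots of unity, equal to
`M̄ / M_sum` if `M̄` divides `(eϑ + u) - (dϑ + v)` and `0` otherwise. Since `U ≤ ϑ` and `Dϑ ≤ M̄`,
the shifted delays `dϑ + u` are distinct residues mod `M̄`, so divisibility forces `d = e`, `u = v`.
-/

open Complex Finset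
open scoped Real

theorem IsPrimitiveRoot.sum_range_zpow_pow {K : Type*} [Field K] {ζ : K} {n : ℕ}
    (hζ : IsPrimitiveRoot ζ n) (t : ℤ) :
    ∑ k ∈ range n, (ζ ^ t) ^ k = if (n : ℤ) ∣ t then (n : K) else 0 := by
  split_ifs with ht
  · simp [(hζ.zpow_eq_one_iff_dvd t).mpr ht]
  · have hpow : (ζ ^ t) ^ n = 1 := by
      rw [← zpow_natCast, ← zpow_mul, mul_comm, zpow_mul, zpow_natCast, hζ.pow_eq_one, one_zpow]
    rw [geom_sum_eq (mt (hζ.zpow_eq_one_iff_dvd t).mp ht), hpow, sub_self, zero_div]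

theorem Complex.sum_exp_two_pi_I_mul_div (n : ℕ) (t : ℤ) :
    ∑ k : Fin n, exp (2 * π * I * k * t / n) = if (n : ℤ) ∣ t then (n : ℂ) else 0 := by
  rcases Nat.eq_zero_or_pos n with rfl | hn
  · simp
  rw [← (isPrimitiveRoot_exp n hn.ne').sum_range_zpow_pow t, ← Fin.sum_univ_eq_sum_range]
  refine sum_congr rfl fun k _ => ?_
  rw [← exp_int_mul, ← exp_nat_mul]
  congr 1
  ring

open Matrix

theorem Matrix.diagonal_mul_mul_mul_apply_of_eq_ite {l m n p α : Type*}
    [Fintype l] [Fintype m] [Fintype n] [DecidableEq l] [DecidableEq m] [DecidableEq n]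
    [Semiring α] (x : l → α) (Φ : Matrix l m α) (F : Matrix m n α) (Ψ : Matrix n p α)
    (σ : l → m) (τ : p → n) (hΦ : ∀ k j, Φ k j = if j = σ k then 1 else 0)
    (hΨ : ∀ j u, Ψ j u = if j = τ u then 1 else 0) (k : l) (u : p) :
    (diagonal x * Φ * F * Ψ) k u = x k * F (σ k) (τ u) := by
  simp only [mul_apply (M := diagonal x * Φ * F), hΨ, mul_ite, mul_one, mul_zero, sum_ite_eq']
  rw [mul_apply]
  simp [diagonal_mul, hΦ]

theorem Matrix.conjTranspose_mul_apply_of_eq_exp {M : ℕ} {ι κ : Type*} (c : ℝ)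
    (a : ι → ℤ) (b : κ → ℤ) (A : Matrix (Fin M) ι ℂ) (B : Matrix (Fin M) κ ℂ)
    (hA : ∀ k i, A k i = c * exp (2 * π * I * (k : ℕ) * a i / M))
    (hB : ∀ k j, B k j = c * exp (2 * π * I * (k : ℕ) * b j / M)) (i : ι) (j : κ) :
    (Aᴴ * B) i j = c ^ 2 * if (M : ℤ) ∣ b j - a i then (M : ℂ) else 0 := by
  have hterm : ∀ k : Fin M,
      star (A k i) * B k j = c ^ 2 * exp (2 * π * I * (k : ℕ) * (b j - a i : ℤ) / M) := by
    intro k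
    rw [hA, hB, star_mul', star_def, conj_ofReal, ← Complex.exp_conj, mul_mul_mul_comm, ← sq,
      ← exp_add]
    congr 2
    simp only [map_div₀, map_mul, map_ofNat, conj_ofReal, conj_I, map_natCast, map_intCast]
    push_cast
    ring
  simp only [mul_apply, conjTranspose_apply, hterm, ← mul_sum, sum_exp_two_pi_I_mul_div]

theorem Nat.mul_add_eq_mul_add_iff {θ d e u v : ℕ} (hu : u < θ) (hv : v < θ) :
    d * θ + u = e * θ + v ↔ d = e ∧ u = v := by
  refine ⟨fun h => ?_, fun ⟨hde, huv⟩ => hde ▸ huv ▸ rfl⟩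
  have hθ : 0 < θ := u.zero_le.trans_lt hu
  have hdiv := congrArg (· / θ) h
  have hmod := congrArg (· % θ) h
  simp only [add_comm (_ * θ), Nat.add_mul_div_right _ _ hθ, Nat.add_mul_mod_self_right,
    Nat.div_eq_of_lt hu, Nat.div_eq_of_lt hv, Nat.mod_eq_of_lt hu, Nat.mod_eq_of_lt hv,
    zero_add] at hdiv hmod
  exact ⟨hdiv, hmod⟩

theorem Int.natCast_dvd_sub_iff_eq {M a b : ℕ} (ha : a < M) (hb : b < M) :
    (M : ℤ) ∣ (a : ℤ) - b ↔ a = b := by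
  refine ⟨fun h => ?_, fun h => by simp [h]⟩
  have := Int.eq_zero_of_abs_lt_dvd h (by rw [abs_lt]; omega)
  omega

theorem Int.natCast_dvd_mul_add_sub_mul_add_iff {M θ D d e u v : ℕ} (hDθ : D * θ ≤ M)
    (hd : d < D) (he : e < D) (hu : u < θ) (hv : v < θ) :
    (M : ℤ) ∣ ((e * θ + u : ℕ) : ℤ) - ((d * θ + v : ℕ) : ℤ) ↔ e = d ∧ u = v := by
  have hlt : ∀ {d w : ℕ}, d < D → w < θ → d * θ + w < M := fun hd hw =>
    calc _ < (_ + 1) * θ := by rw [add_mul, one_mul]; omega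
      _ ≤ D * θ := Nat.mul_le_mul_right θ hd
      _ ≤ M := hDθ
  rw [natCast_dvd_sub_iff_eq (hlt he hu) (hlt hd hv), Nat.mul_add_eq_mul_add_iff hu hv]

theorem Matrix.conjTranspose_mul_eq_ite_of_apply_eq_exp {M D U θ : ℕ} (hUθ : U ≤ θ)
    (hDθ : D * θ ≤ M) (c : ℝ) (J : Fin D → Matrix (Fin M) (Fin U) ℂ)
    (hJ : ∀ d k u, J d k u = c * exp (2 * π * I * (k : ℕ) * (((d : ℕ) * θ - (u : ℕ) : ℤ) : ℂ) / M))
    (d e : Fin D) :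
    (J d)ᴴ * J e = if d = e then ((c : ℂ) ^ 2 * M) • 1 else 0 := by
  ext u v
  have hphase : ((e : ℕ) * θ - (v : ℕ) : ℤ) - ((d : ℕ) * θ - (u : ℕ)) =
      (((e : ℕ) * θ + u : ℕ) : ℤ) - (((d : ℕ) * θ + v : ℕ) : ℤ) := by
    push_cast
    ring
  rw [conjTranspose_mul_apply_of_eq_exp _ _ _ _ _ (hJ d) (hJ e), hphase]
  simp only [Int.natCast_dvd_mul_add_sub_mul_add_iff hDθ d.isLt e.isLt (u.isLt.trans_le hUθ)
    (v.isLt.trans_le hUθ), Fin.val_inj]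
  by_cases hde : d = e
  · subst hde
    by_cases huv : u = v <;> simp [huv]
  · simp [hde, Ne.symm hde]

theorem stmt_6_general (Mbar D U s : ℕ) (hD : 0 < D) (hs : 0 < s)
    (hMbar : D * U ≤ Mbar) (Msum : ℕ) (hMsum : Msum = Mbar * s)
    (ϑ : ℕ) (hϑ : ϑ = Mbar / D)
    (F : Matrix (Fin Msum) (Fin Msum) ℂ)
    (hF : ∀ a b : Fin Msum, F a b =
      (1 / Real.sqrt Msum : ℝ) * Complex.exp (-2 * Real.pi * I * (a : ℕ) * (b : ℕ) / Msum))
    (Ψ : Matrix (Fin Msum) (Fin U) ℂ)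
    (hΨ : ∀ a u, Ψ a u = if (a : ℕ) = (u : ℕ) then 1 else 0)
    (Φ : Matrix (Fin Mbar) (Fin Msum) ℂ)
    (hΦ : ∀ k n, Φ k n = if (n : ℕ) = (k : ℕ) * s then 1 else 0)
    (x : Fin D → Fin Mbar → ℂ)
    (hx : ∀ d k, x d k =
      Complex.exp (2 * Real.pi * I * (k : ℕ) * (d : ℕ) * ϑ / Mbar))
    (J : Fin D → Matrix (Fin Mbar) (Fin U) ℂ)
    (hJ : ∀ d, J d = Matrix.diagonal (x d) * Φ * F * Ψ) :
    (∀ d : Fin D, (J d)ᴴ * J d = ((Mbar : ℂ) / (Msum : ℂ)) • (1 : Matrix (Fin U) (Fin U) ℂ)) ∧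
    (∀ d k : Fin D, d ≠ k → (J d)ᴴ * J k = 0) := by
  have hUϑ : U ≤ ϑ := hϑ ▸ (Nat.le_div_iff_mul_le hD).mpr (by rwa [mul_comm])
  have hDϑ : D * ϑ ≤ Mbar := hϑ ▸ Nat.mul_div_le Mbar D
  let σ : Fin Mbar → Fin Msum := fun k => ⟨k * s, hMsum ▸ Nat.mul_lt_mul_of_pos_right k.isLt hs⟩
  let τ : Fin U → Fin Msum := fun u => ⟨u, by
    have := Nat.le_mul_of_pos_left U hD
    have := Nat.le_mul_of_pos_right Mbar hs
    omega⟩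
  have hJ_apply : ∀ d k u, J d k u = (1 / Real.sqrt Msum : ℝ) *
      exp (2 * π * I * (k : ℕ) * (((d : ℕ) * ϑ - (u : ℕ) : ℤ) : ℂ) / Mbar) := by
    intro d k u
    have hMbar : (Mbar : ℂ) ≠ 0 := Nat.cast_ne_zero.mpr k.pos.ne'
    have hs' : (s : ℂ) ≠ 0 := Nat.cast_ne_zero.mpr hs.ne'
    rw [hJ, diagonal_mul_mul_mul_apply_of_eq_ite _ _ _ _ σ τ
      (fun k j => by simp [hΦ, σ, Fin.ext_iff]) (fun j u => by simp [hΨ, τ, Fin.ext_iff]),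
      hx, hF, mul_left_comm, ← exp_add, show (Msum : ℂ) = Mbar * s by rw [hMsum, Nat.cast_mul]]
    congr 2
    simp only [σ, τ]
    push_cast
    field_simp
    ring
  have hc : ((1 / Real.sqrt Msum : ℝ) : ℂ) ^ 2 * Mbar = Mbar / Msum := by
    rw [← ofReal_pow, div_pow, Real.sq_sqrt (Nat.cast_nonneg _)]
    push_cast
    ring
  have hgram := conjTranspose_mul_eq_ite_of_apply_eq_exp hUϑ hDϑ _ J hJ_apply
  simp only [hc] at hgram
  exact ⟨fun d => by simpa using hgram d d, fun d e hde => by simpa [hde] using hgram d e⟩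

/-- Mutual orthogonality of the frequency-domain pilot projection matrices `J_d`. -/
theorem stmt_6 (Mbar D U s : ℕ) (hD : 0 < D) (hU : 0 < U) (hs : 0 < s)
    (hMbar : D * U ≤ Mbar) (Msum : ℕ) (hMsum : Msum = Mbar * s)
    (ϑ : ℕ) (hϑ : ϑ = Mbar / D)
    (hMbarpos : 0 < Mbar)
    (F : Matrix (Fin Msum) (Fin Msum) ℂ)
    (hF : ∀ a b : Fin Msum, F a b =
      (1 / Real.sqrt Msum : ℝ) * Complex.exp (-2 * Real.pi * I * (a : ℕ) * (b : ℕ) / Msum))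
    (Ψ : Matrix (Fin Msum) (Fin U) ℂ)
    (hΨ : ∀ a u, Ψ a u = if (a : ℕ) = (u : ℕ) then 1 else 0)
    (Φ : Matrix (Fin Mbar) (Fin Msum) ℂ)
    (hΦ : ∀ k n, Φ k n = if (n : ℕ) = (k : ℕ) * s then 1 else 0)
    (x : Fin D → Fin Mbar → ℂ)
    (hx : ∀ d k, x d k =
      Complex.exp (2 * Real.pi * I * (k : ℕ) * (d : ℕ) * ϑ / Mbar))
    (J : Fin D → Matrix (Fin Mbar) (Fin U) ℂ)
    (hJ : ∀ d, J d = Matrix.diagonal (x d) * Φ * F * Ψ) :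
    (∀ d : Fin D, (J d)ᴴ * J d = ((Mbar : ℂ) / (Msum : ℂ)) • (1 : Matrix (Fin U) (Fin U) ℂ)) ∧
    (∀ d k : Fin D, d ≠ k → (J d)ᴴ * J k = 0) :=
  stmt_6_general Mbar D U s hD hs hMbar Msum hMsum ϑ hϑ F hF Ψ hΨ Φ hΦ x hx J hJ
end

section
/- Let F : ℝⁿ → ℝ and let {p^(t)} be generated by the block-coordinate QT iteration: z^(t) = √(A(p^(t)))/B(p^(t)) and p^(t+1) ∈ argmax_p Σ_k R_k(2 z_k^(t) √(A_k(p)) − (z_k^(t))² B_k(p)) over a fixed convex feasible set, where each R_k is nondecreasing and concave and A_k, B_k > 0 on the feasible set. Then the objective sequence F(p^(t)) = Σ_k R_k(A_k(p^(t))/B_k(p^(t))) is nondecreasing in t. -/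
/-!
The quadratic transform `2 y √a - y² b` is, for `b > 0`, a lower bound of `a / b` in `y`
(the gap is `(√a - y b)² / b`) that is tight at `y = √a / b`. So each `z`-update makes the
surrogate agree with the objective at `p^(t)`, the `p`-update can only raise the surrogate, and
the surrogate at `p^(t+1)` stays below the objective there because each `R_k` is monotone.
-/

namespace QuadraticTransform

open Real

theorem two_mul_mul_sqrt_sub_sq_mul_le_div {a b : ℝ} (y : ℝ) (ha : 0 ≤ a) (hb : 0 < b) :
    2 * y * √a - y ^ 2 * b ≤ a / b := by
  have hgap : a / b - (2 * y * √a - y ^ 2 * b) = (√a - y * b) ^ 2 / b := by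
    field_simp
    linear_combination -sq_sqrt ha
  have : 0 ≤ (√a - y * b) ^ 2 / b := by positivity
  linarith

theorem two_mul_mul_sqrt_sub_sq_mul_eq_div {a b : ℝ} (ha : 0 ≤ a) (hb : b ≠ 0) :
    2 * (√a / b) * √a - (√a / b) ^ 2 * b = a / b := by
  field_simp
  linear_combination sq_sqrt ha

end QuadraticTransform

open QuadraticTransform in
theorem stmt_14_general {n : ℕ} (K : ℕ) (S : Set (Fin n → ℝ))
    (R : Fin K → ℝ → ℝ) (A B : Fin K → (Fin n → ℝ) → ℝ)
    (hR : ∀ k, Monotone (R k))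
    (hA : ∀ k q, q ∈ S → 0 < A k q) (hB : ∀ k q, q ∈ S → 0 < B k q)
    (p : ℕ → (Fin n → ℝ)) (hp : ∀ t, p t ∈ S)
    (z : ℕ → Fin K → ℝ)
    (hz : ∀ t k, z t k = Real.sqrt (A k (p t)) / B k (p t))
    (hmax : ∀ t, ∀ q ∈ S,
      ∑ k, R k (2 * z t k * Real.sqrt (A k q) - (z t k) ^ 2 * B k q) ≤
        ∑ k, R k (2 * z t k * Real.sqrt (A k (p (t + 1))) - (z t k) ^ 2 * B k (p (t + 1)))) :
    ∀ t, ∑ k, R k (A k (p t) / B k (p t)) ≤ ∑ k, R k (A k (p (t + 1)) / B k (p (t + 1))) := by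
  intro t
  have htight : ∀ k, 2 * z t k * Real.sqrt (A k (p t)) - (z t k) ^ 2 * B k (p t)
      = A k (p t) / B k (p t) := fun k => by
    rw [hz t k]
    exact two_mul_mul_sqrt_sub_sq_mul_eq_div (hA k _ (hp t)).le (hB k _ (hp t)).ne'
  calc ∑ k, R k (A k (p t) / B k (p t))
      = ∑ k, R k (2 * z t k * Real.sqrt (A k (p t)) - (z t k) ^ 2 * B k (p t)) := by
        simp only [htight]
    _ ≤ ∑ k, R k (2 * z t k * Real.sqrt (A k (p (t + 1))) - (z t k) ^ 2 * B k (p (t + 1))) :=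
        hmax t (p t) (hp t)
    _ ≤ ∑ k, R k (A k (p (t + 1)) / B k (p (t + 1))) :=
        Finset.sum_le_sum fun k _ => hR k <|
          two_mul_mul_sqrt_sub_sq_mul_le_div _ (hA k _ (hp (t + 1))).le (hB k _ (hp (t + 1)))

/-- Monotone ascent of the block-coordinate QT iteration: alternately setting
`z^(t) = √(A(p^(t)))/B(p^(t))` and maximizing the quadratic-transform surrogate in `p`
never decreases the original sum-of-ratios objective. -/
theorem stmt_14 {n : ℕ} (K : ℕ) (S : Set (Fin n → ℝ)) (hS : Convex ℝ S)
    (R : Fin K → ℝ → ℝ) (A B : Fin K → (Fin n → ℝ) → ℝ)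
    (hR : ∀ k, Monotone (R k)) (hRconc : ∀ k, ConcaveOn ℝ Set.univ (R k))
    (hA : ∀ k q, q ∈ S → 0 < A k q) (hB : ∀ k q, q ∈ S → 0 < B k q)
    (p : ℕ → (Fin n → ℝ)) (hp : ∀ t, p t ∈ S)
    (z : ℕ → Fin K → ℝ)
    (hz : ∀ t k, z t k = Real.sqrt (A k (p t)) / B k (p t))
    (hmax : ∀ t, ∀ q ∈ S,
      ∑ k, R k (2 * z t k * Real.sqrt (A k q) - (z t k) ^ 2 * B k q) ≤
        ∑ k, R k (2 * z t k * Real.sqrt (A k (p (t + 1))) - (z t k) ^ 2 * B k (p (t + 1)))) :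
    ∀ t, ∑ k, R k (A k (p t) / B k (p t)) ≤ ∑ k, R k (A k (p (t + 1)) / B k (p (t + 1))) :=
  stmt_14_general K S R A B hR hA hB p hp z hz hmax
end
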